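/- For the negative-exponential jump measure $\nu(dJ) = \phi e^{\phi J}\mathbf{1}_{J\le 0}\,dJ$ with $\phi > 0$, and any real number $u$ with $u > -\phi$, the integral $\lambda\int_{-\infty}^0 \left[ e^{uJ} - 1 - (e^J - 1)u \right] \phi e^{\phi J}\, dJ$ converges and equals $\frac{\lambda}{\phi+1}\cdot\frac{u^2 - u}{\phi + u}$. -/

import Mathlib

open MeasureTheory Real

/-! Against the density `φ e^{φJ}` the compensated integrand splits into three exponentials
`e^{aJ}` with `a ∈ {u + φ, 1 + φ, φ}`, all positive when `u > -φ`; each integrates over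
`(-∞, 0]` to `1 / a`, and the three terms combine to `(u² - u) / ((φ + 1)(φ + u))`. -/

lemma exp_jump_integrand_eq (u φ J : ℝ) :
    (exp (u * J) - 1 - (exp J - 1) * u) * (φ * exp (φ * J))
      = φ * exp ((u + φ) * J) - u * φ * exp ((1 + φ) * J) + (u - 1) * φ * exp (φ * J) := by
  simp only [add_mul, one_mul, exp_add]
  ring

theorem exponential_jump_symbol_general
    (φ lam u : ℝ) (hφ : 0 < φ) (hu : -φ < u) :
    IntegrableOn
      (fun J : ℝ => (Real.exp (u * J) - 1 - (Real.exp J - 1) * u) * (φ * Real.exp (φ * J)))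
      (Set.Iic 0)
    ∧ lam * ∫ J in Set.Iic (0 : ℝ),
        (Real.exp (u * J) - 1 - (Real.exp J - 1) * u) * (φ * Real.exp (φ * J))
      = lam / (φ + 1) * ((u ^ 2 - u) / (φ + u)) := by
  have huφ : 0 < u + φ := by linarith
  have h1φ : 0 < 1 + φ := by linarith
  have i₁ := (integrableOn_exp_mul_Iic huφ 0).const_mul φ
  have i₂ := (integrableOn_exp_mul_Iic h1φ 0).const_mul (u * φ)
  have i₃ := (integrableOn_exp_mul_Iic hφ 0).const_mul ((u - 1) * φ)
  have i₁₂ : IntegrableOn (fun J => φ * exp ((u + φ) * J) - u * φ * exp ((1 + φ) * J))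
      (Set.Iic 0) := i₁.sub i₂
  simp_rw [exp_jump_integrand_eq]
  refine ⟨i₁₂.add i₃, ?_⟩
  rw [integral_add i₁₂ i₃, integral_sub i₁ i₂, integral_const_mul, integral_const_mul,
    integral_const_mul, integral_exp_mul_Iic huφ, integral_exp_mul_Iic h1φ,
    integral_exp_mul_Iic hφ]
  have hφu : φ + u ≠ 0 := by linarith
  simp only [mul_zero, exp_zero]
  field_simp
  ring

/-- For the negative-exponential jump measure `ν(dJ) = φ e^{φJ} 1_{J ≤ 0} dJ` with `φ > 0`
and `u > -φ`, the compensated jump integral converges and equals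
`λ/(φ+1) · (u² - u)/(φ + u)`. -/
theorem exponential_jump_symbol
    (φ lam u : ℝ) (hφ : 0 < φ) (hlam : 0 ≤ lam) (hu : -φ < u) :
    IntegrableOn
      (fun J : ℝ => (Real.exp (u * J) - 1 - (Real.exp J - 1) * u) * (φ * Real.exp (φ * J)))
      (Set.Iic 0)
    ∧ lam * ∫ J in Set.Iic (0 : ℝ),
        (Real.exp (u * J) - 1 - (Real.exp J - 1) * u) * (φ * Real.exp (φ * J))
      = lam / (φ + 1) * ((u ^ 2 - u) / (φ + u)) :=
  exponential_jump_symbol_general φ lam u hφ hu
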